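/- arXiv:1708.05450 — 5 statements merged into one kernel-verified Lean document; each statement's English description precedes it below -/
import Mathlib

section
/- If (( (q^r-1)/(q-1) − 1)(q^{r−1} − 1))/2 = (q̄(q̄ − 1))/2 for prime powers q, q̄ and an integer r ≥ 2, then q̄ = q^{r-1} and r = 2 (hence q̄ = q). -/
private lemma geom_nat (q : ℕ) (hq : 1 ≤ q) (n : ℕ) :
    (q - 1) * ∑ i ∈ Finset.range n, q ^ i = q ^ n - 1 := by
  induction n with
  | zero => simp
  | succ n ih =>
    rw [Finset.sum_range_succ, Nat.mul_add, ih, pow_succ]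
    have h1 : 1 ≤ q ^ n := Nat.one_le_pow _ _ hq
    have h2 : (q - 1) * q ^ n = q ^ n * q - q ^ n := by
      rw [Nat.sub_mul, one_mul, mul_comm]
    have h3 : q ^ n ≤ q ^ n * q := Nat.le_mul_of_pos_right _ (by omega)
    omega

/-- If the genus of the norm-trace curve `N_{q,r}` equals the genus of the
Hermitian curve `H_{q̄}` (for `q = p^e`, `q̄ = p^f` powers of the same prime
and `r ≥ 2`), i.e. `((q^r-1)/(q-1) - 1)(q^{r-1} - 1) = q̄(q̄ - 1)`, then
`q̄ = q^{r-1}` and `r = 2` (hence `q̄ = q`). -/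
theorem stmt_3 (p : ℕ) (hp : p.Prime) (e f r : ℕ) (he : 1 ≤ e) (hf : 1 ≤ f)
    (hr : 2 ≤ r) (q qb : ℕ) (hq : q = p ^ e) (hqb : qb = p ^ f)
    (h : ((q ^ r - 1) / (q - 1) - 1) * (q ^ (r - 1) - 1) = qb * (qb - 1)) :
    qb = q ^ (r - 1) ∧ r = 2 := by
  haveI : Fact p.Prime := ⟨hp⟩
  have hp2 := hp.two_le
  have hq2 : 2 ≤ q := by rw [hq]; calc 2 ≤ p := hp2
                                       _ ≤ p ^ e := Nat.le_self_pow (by omega) _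
  have hqb2 : 2 ≤ qb := by rw [hqb]; calc 2 ≤ p := hp2
                                          _ ≤ p ^ f := Nat.le_self_pow (by omega) _
  set s := r - 1 with hs
  have hrs : r = s + 1 := by omega
  have hs1 : 1 ≤ s := by omega
  set T : ℕ := ∑ i ∈ Finset.range s, q ^ i with hT
  set S : ℕ := ∑ i ∈ Finset.range r, q ^ i with hS
  have hgs : (q - 1) * S = q ^ r - 1 := geom_nat q (by omega) r
  have hgt : (q - 1) * T = q ^ s - 1 := geom_nat q (by omega) s
  have hdiv : (q ^ r - 1) / (q - 1) = S := by
    rw [← hgs, Nat.mul_div_cancel_left _ (by omega)]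
  have hS1 : S - 1 = q * T := by
    have : S = (∑ i ∈ Finset.range s, q ^ (i + 1)) + q ^ 0 := by
      rw [hS, hrs, Finset.sum_range_succ']
    rw [this]
    simp only [pow_succ, pow_zero, ← Finset.sum_mul]
    rw [mul_comm, Nat.add_sub_cancel]
  rw [hdiv, hS1, ← hgt] at h
  -- h : q * T * ((q-1) * T) = qb * (qb - 1)
  have hT1 : 1 ≤ T := by
    rw [hT]
    calc 1 = q ^ 0 := by simp
    _ ≤ ∑ i ∈ Finset.range s, q ^ i := Finset.single_le_sum (f := fun i => q ^ i)
        (fun i _ => Nat.zero_le _) (Finset.mem_range.2 (by omega))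
  have hpq : p ∣ q := by rw [hq]; exact dvd_pow_self p (by omega)
  have hpd : ¬ p ∣ (q - 1) := fun hd => by
    have h1 : p ∣ q - (q - 1) := Nat.dvd_sub hpq hd
    have : q - (q - 1) = 1 := by omega
    rw [this] at h1
    have := Nat.eq_one_of_dvd_one h1
    omega
  have hpT : ¬ p ∣ T := by
    intro hd
    have hTe : T = (∑ i ∈ Finset.range (s - 1), q ^ (i + 1)) + 1 := by
      have : s = (s - 1) + 1 := by omega
      rw [hT, this, Finset.sum_range_succ']; simp
    have hps : p ∣ ∑ i ∈ Finset.range (s - 1), q ^ (i + 1) :=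
      Finset.dvd_sum fun i _ => hpq.trans (dvd_pow_self q (Nat.succ_ne_zero i))
    have h1 : p ∣ 1 := by
      have := Nat.dvd_sub hd hps
      rwa [hTe, Nat.add_sub_cancel_left] at this
    have := Nat.eq_one_of_dvd_one h1
    omega
  -- valuations
  have hqT : 0 < q * T := Nat.mul_pos (by omega) hT1
  have hdT : 0 < (q - 1) * T := Nat.mul_pos (by omega) hT1
  have hv1 : padicValNat p (q * T * ((q - 1) * T)) = e := by
    rw [padicValNat.mul hqT.ne' hdT.ne', padicValNat.mul (by omega) (by omega),
      padicValNat.mul (by omega) (by omega),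
      padicValNat.eq_zero_of_not_dvd hpT, padicValNat.eq_zero_of_not_dvd hpd, hq,
      padicValNat.prime_pow]
    omega
  have hv2 : padicValNat p (qb * (qb - 1)) = f := by
    have hpqb1 : ¬ p ∣ (qb - 1) := by
      intro hd
      have hpqb : p ∣ qb := by rw [hqb]; exact dvd_pow_self p (by omega)
      have h1 : p ∣ qb - (qb - 1) := Nat.dvd_sub hpqb hd
      have h2 : qb - (qb - 1) = 1 := by omega
      rw [h2] at h1
      have := Nat.eq_one_of_dvd_one h1
      omega
    rw [padicValNat.mul (by omega) (by omega), padicValNat.eq_zero_of_not_dvd hpqb1, hqb,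
      padicValNat.prime_pow]
    omega
  have hef : e = f := by rw [← hv1, ← hv2, h]
  have hqqb : qb = q := by rw [hqb, hq, hef]
  -- now T = 1
  rw [hqqb] at h
  have hc : q * (q - 1) * (T * T) = q * (q - 1) * 1 := by
    calc q * (q - 1) * (T * T) = q * T * ((q - 1) * T) := by ring
    _ = q * (q - 1) := h
    _ = q * (q - 1) * 1 := (mul_one _).symm
  have hTT : T * T = 1 := Nat.eq_of_mul_eq_mul_left (Nat.mul_pos (by omega) (by omega)) hc
  have hT1' : T = 1 := by
    rcases Nat.lt_or_ge T 2 with hlt | hge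
    · omega
    · have h4 : 2 * 2 ≤ T * T := Nat.mul_le_mul hge hge
      rw [hTT] at h4
      omega
  have hsT : s ≤ T := by
    calc s = ∑ i ∈ Finset.range s, 1 := by simp
    _ ≤ ∑ i ∈ Finset.range s, q ^ i :=
      Finset.sum_le_sum fun i _ => Nat.one_le_pow _ _ (by omega)
  have hs2 : s = 1 := by omega
  constructor
  · show qb = q ^ s
    rw [hs2, pow_one, hqqb]
  · omega
end

section
/- For a separable additive polynomial A(Y) = Σ_j a_j Y^{p^j} over an algebraically closed field K of characteristic p with a_0 ≠ 0, and μ ∈ K*, the following are equivalent: (1) A(μa) = 0 for every a ∈ K with A(a) = 0; (2) A(μY) is a scalar multiple of A(Y); (3) μ ∈ F_{p^d}*, where d is the largest integer such that A is p^d-linearized, i.e. d = gcd{ j ≥ 1 : a_j ≠ 0 }. -/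
open scoped Classical

open Polynomial

section StmtAux
variable {K : Type*} [Field K] (p : ℕ) [CharP K p]

private lemma stmt5_frob_inj (hp : p.Prime) (m : ℕ) {x y : K} (h : x ^ p ^ m = y ^ p ^ m) :
    x = y := by
  haveI := Fact.mk hp
  have h0 : (x - y) ^ p ^ m = 0 := by rw [sub_pow_char_pow, h, sub_self]
  exact sub_eq_zero.mp (pow_eq_zero_iff (pow_ne_zero m hp.ne_zero) |>.mp h0)

private lemma stmt5_mul (μ : K) (a q : ℕ) (h : μ ^ p ^ a = μ) : μ ^ p ^ (a * q) = μ := by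
  induction q with
  | zero => simp
  | succ q ih => rw [Nat.mul_succ, pow_add, pow_mul, ih, h]

private lemma stmt5_gcd (hp : p.Prime) (μ : K) : ∀ a b : ℕ, μ ^ p ^ a = μ → μ ^ p ^ b = μ →
    μ ^ p ^ (Nat.gcd a b) = μ := by
  intro a
  induction a using Nat.strong_induction_on with
  | _ a ih =>
    intro b ha hb
    rcases Nat.eq_zero_or_pos a with rfl | hpos
    · simpa using hb
    · rw [Nat.gcd_rec]
      refine ih (b % a) (Nat.mod_lt _ hpos) a ?_ ha
      apply stmt5_frob_inj p hp (a * (b / a))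
      rw [← pow_mul, ← pow_add, Nat.mod_add_div, hb, stmt5_mul p μ a (b/a) ha]

private lemma stmt5_gcd_finset (hp : p.Prime) (μ : K) {ι : Type*} (s : Finset ι) (f : ι → ℕ)
    (h : ∀ j ∈ s, μ ^ p ^ (f j) = μ) : μ ^ p ^ (s.gcd f) = μ := by
  classical
  induction s using Finset.induction_on with
  | empty => simp [Finset.gcd_empty]
  | @insert b s' hbs ih =>
    rw [Finset.gcd_insert]
    have hb : μ ^ p ^ (f b) = μ := h b (Finset.mem_insert_self _ _)
    have hs : μ ^ p ^ (s'.gcd f) = μ := ih fun j hj => h j (Finset.mem_insert_of_mem hj)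
    exact stmt5_gcd p hp μ _ _ hb hs

end StmtAux

/-- For a separable additive polynomial `A(Y) = ∑ a_j Y^{p^j}` (with `a_0 ≠ 0`,
`a_n ≠ 0`) over an algebraically closed field of characteristic `p`, and
`μ ∈ K*`, the following are equivalent: (1) `μ` maps the roots of `A` to roots
of `A`; (2) `A(μY)` is a scalar multiple of `A(Y)`; (3) `μ ∈ F_{p^d}*`, where
`d` is the gcd of the indices `j` with `a_j ≠ 0` (the largest `d` such that
`A` is `p^d`-linearized). Membership in `F_{p^d}*` is expressed as
`μ^{p^d - 1} = 1`. -/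
theorem stmt_5 {K : Type*} [Field K] [IsAlgClosed K] (p : ℕ) (hp : p.Prime) [CharP K p]
    (n : ℕ) (hn : 1 ≤ n) (a : Fin (n + 1) → K) (ha0 : a 0 ≠ 0) (han : a (Fin.last n) ≠ 0)
    (A : Polynomial K) (hA : A = ∑ j : Fin (n + 1), C (a j) * X ^ (p ^ (j : ℕ)))
    (d : ℕ) (hd : d = Finset.gcd (Finset.univ.filter fun j => a j ≠ 0)
      (fun j : Fin (n + 1) => (j : ℕ)))
    (μ : K) (hμ : μ ≠ 0) :
    ((∀ x : K, A.eval x = 0 → A.eval (μ * x) = 0) ↔ μ ^ (p ^ d - 1) = 1) ∧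
    ((∃ c : K, A.comp (C μ * X) = C c * A) ↔ μ ^ (p ^ d - 1) = 1) := by
  have hp2 : 2 ≤ p := hp.two_le
  have hpd1 : 1 ≤ p ^ d := Nat.one_le_pow _ _ hp.pos
  -- translation between `μ ^ (p^d - 1) = 1` and `μ ^ p^d = μ`
  have hiff3 : μ ^ (p ^ d - 1) = 1 ↔ μ ^ p ^ d = μ := by
    constructor
    · intro h
      have : μ ^ p ^ d = μ ^ (p ^ d - 1) * μ := by
        rw [← pow_succ, Nat.sub_add_cancel hpd1]
      rw [this, h, one_mul]
    · intro h
      have : μ ^ (p ^ d - 1) * μ = 1 * μ := by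
        rw [← pow_succ, Nat.sub_add_cancel hpd1, h, one_mul]
      exact mul_right_cancel₀ hμ this
  -- powers of p are injective in the exponent
  have hpinj : Function.Injective (fun j : ℕ => p ^ j) := fun i j h =>
    Nat.pow_right_injective hp2 h
  -- coefficients of A
  have hcoeff : ∀ k : Fin (n + 1), A.coeff (p ^ (k : ℕ)) = a k := by
    intro k
    rw [hA, finset_sum_coeff]
    rw [Finset.sum_eq_single k]
    · rw [coeff_C_mul, coeff_X_pow]; simp
    · intro j _ hjk
      have : p ^ (k : ℕ) ≠ p ^ (j : ℕ) := fun h => hjk (Fin.val_injective (hpinj h)).symm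
      rw [coeff_C_mul, coeff_X_pow, if_neg this, mul_zero]
    · simp
  -- comp computation
  have hcomp : A.comp (C μ * X) = ∑ j : Fin (n + 1), C (a j * μ ^ p ^ (j : ℕ)) * X ^ p ^ (j : ℕ) := by
    rw [hA, Polynomial.sum_comp]
    refine Finset.sum_congr rfl fun j _ => ?_
    rw [mul_comp, C_comp, pow_comp, X_comp, mul_pow, ← C_pow, C_mul]
    ring
  -- coefficients of the comp
  have hcoeffB : ∀ k : Fin (n + 1), (A.comp (C μ * X)).coeff (p ^ (k : ℕ)) = a k * μ ^ p ^ (k : ℕ) := by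
    intro k
    rw [hcomp, finset_sum_coeff, Finset.sum_eq_single k]
    · rw [coeff_C_mul, coeff_X_pow]; simp
    · intro j _ hjk
      have : p ^ (k : ℕ) ≠ p ^ (j : ℕ) := fun h => hjk (Fin.val_injective (hpinj h)).symm
      rw [coeff_C_mul, coeff_X_pow, if_neg this, mul_zero]
    · simp
  -- (3) → (2)
  have h32 : μ ^ p ^ d = μ → A.comp (C μ * X) = C μ * A := by
    intro h3
    rw [hcomp, hA, Finset.mul_sum]
    refine Finset.sum_congr rfl fun j _ => ?_
    by_cases hj : a j = 0
    · rw [hj]; simp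
    · have hdvd : d ∣ (j : ℕ) := by
        rw [hd]
        exact Finset.gcd_dvd (Finset.mem_filter.mpr ⟨Finset.mem_univ _, hj⟩)
      obtain ⟨q, hq⟩ := hdvd
      have : μ ^ p ^ (j : ℕ) = μ := by rw [hq]; exact stmt5_mul p μ d q h3
      rw [this, ← mul_assoc, ← C_mul, mul_comm μ (a j)]
  -- (2) → (3)
  have h23 : (∃ c : K, A.comp (C μ * X) = C c * A) → μ ^ p ^ d = μ := by
    rintro ⟨c, hc⟩
    have hcmu : c = μ := by
      have h0 := congrArg (fun q => Polynomial.coeff q (p ^ ((0 : Fin (n+1)) : ℕ))) hc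
      simp only [coeff_C_mul] at h0
      rw [hcoeffB 0, hcoeff 0] at h0
      simp only [Fin.val_zero, pow_zero, pow_one] at h0
      exact mul_right_cancel₀ ha0 (by rw [← h0, mul_comm])
    rw [hd]
    refine stmt5_gcd_finset p hp μ _ _ ?_
    intro j hj
    have hjne : a j ≠ 0 := (Finset.mem_filter.mp hj).2
    have h0 := congrArg (fun q => Polynomial.coeff q (p ^ ((j : Fin (n+1)) : ℕ))) hc
    simp only [coeff_C_mul] at h0
    rw [hcoeffB j, hcoeff j, hcmu] at h0
    have h1 : a j * μ ^ p ^ (j : ℕ) = a j * μ := by rw [h0, mul_comm]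
    exact mul_left_cancel₀ hjne h1
  -- facts about A needed for (1) → (2)
  have hAne : A ≠ 0 := fun h => ha0 (by simpa [h] using (hcoeff 0).symm)
  have hderiv : A.derivative = C (a 0) := by
    rw [hA, derivative_sum]
    rw [Finset.sum_eq_single (0 : Fin (n + 1))]
    · simp
    · intro j _ hj
      have hj' : (j : ℕ) ≠ 0 := fun h => hj (Fin.val_injective h)
      have : ((p ^ (j : ℕ) : ℕ) : K) = 0 := by
        have : (p : ℕ) ∣ p ^ (j : ℕ) := dvd_pow_self p hj'
        obtain ⟨t, ht⟩ := this
        rw [ht]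
        push_cast
        rw [CharP.cast_eq_zero K p, zero_mul]
      simp [derivative_C_mul, derivative_X_pow, this]
    · simp
  have hsep : A.Separable := by
    refine ⟨0, C (a 0)⁻¹, ?_⟩
    rw [hderiv, zero_mul, zero_add, ← C_mul, inv_mul_cancel₀ ha0, C_1]
  have hnodup : A.roots.Nodup := nodup_roots hsep
  -- degree facts
  have hdegle : A.natDegree ≤ p ^ n := by
    rw [hA]
    refine Polynomial.natDegree_sum_le_of_forall_le _ _ fun j _ => ?_
    refine le_trans (natDegree_C_mul_le _ _) ?_
    rw [natDegree_X_pow]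
    exact Nat.pow_le_pow_right hp.pos (Fin.is_le j)
  have hdeg : A.natDegree = p ^ n := by
    refine le_antisymm hdegle (le_natDegree_of_ne_zero ?_)
    rw [show (p ^ n : ℕ) = p ^ ((Fin.last n : Fin (n+1)) : ℕ) by simp, hcoeff]
    exact han
  -- (1) → (2)
  have h12 : (∀ x : K, A.eval x = 0 → A.eval (μ * x) = 0) → ∃ c : K, A.comp (C μ * X) = C c * A := by
    intro h1
    set B := A.comp (C μ * X) with hB
    have hBdeg : B.natDegree = p ^ n := by
      rw [hB, natDegree_comp, natDegree_C_mul_X μ hμ, hdeg, mul_one]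
    have hBne : B ≠ 0 := fun h => by
      rw [h, natDegree_zero] at hBdeg
      exact pow_ne_zero n hp.ne_zero hBdeg.symm
    have hroots : A.roots ≤ B.roots := by
      rw [Multiset.le_iff_count]
      intro v
      by_cases hv : v ∈ A.roots
      · have h1le : Multiset.count v A.roots ≤ 1 := Multiset.nodup_iff_count_le_one.mp hnodup v
        have hvA : A.eval v = 0 := isRoot_of_mem_roots hv
        have hvB : B.eval v = 0 := by
          rw [hB, eval_comp]
          simpa using h1 v hvA
        have : v ∈ B.roots := (mem_roots hBne).mpr hvB
        calc Multiset.count v A.roots ≤ 1 := h1le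
          _ ≤ Multiset.count v B.roots := Multiset.one_le_count_iff_mem.mpr this
      · simp [Multiset.count_eq_zero_of_notMem hv]
    have hsplit : A.Splits := IsAlgClosed.splits A
    have hdvd : A ∣ B := hsplit.dvd_of_roots_le_roots hAne hroots
    obtain ⟨q, hq⟩ := hdvd
    have hqne : q ≠ 0 := fun h => hBne (by rw [hq, h, mul_zero])
    have hqdeg : q.natDegree = 0 := by
      have := natDegree_mul hAne hqne
      rw [← hq, hBdeg, hdeg] at this
      omega
    refine ⟨q.coeff 0, ?_⟩
    rw [hq, ← eq_C_of_natDegree_eq_zero hqdeg, mul_comm]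
  constructor
  · rw [hiff3]
    constructor
    · exact fun h1 => h23 (h12 h1)
    · intro h3 x hx
      have := h32 h3
      have h0 := congrArg (fun q => Polynomial.eval x q) this
      simp only [eval_comp, eval_mul, eval_C, eval_X] at h0
      rw [h0, hx, mul_zero]
  · rw [hiff3]
    exact ⟨h23, fun h3 => ⟨μ, h32 h3⟩⟩
end

section
/- If A(aY) = k·A(Y) as polynomials, where A(Y) = Σ_j a_j Y^{p^j} is a separable additive polynomial with a_0 ≠ 0 over a field of characteristic p and a, k are nonzero field elements, then k = a and a^{p^d − 1} = 1, where d = gcd{ j : a_j ≠ 0 }. -/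
open scoped Classical

open Polynomial

private lemma aux_pow_mod {K : Type*} [Field K] (p : ℕ) (a : K)
    (n : ℕ) (h : a ^ (p ^ n) = a) : ∀ q r : ℕ, a ^ (p ^ (q * n + r)) = a ^ (p ^ r) := by
  intro q
  induction q with
  | zero => simp
  | succ q ih =>
    intro r
    have hqr : (q + 1) * n + r = n + (q * n + r) := by ring
    rw [hqr, pow_add, pow_mul, h, ih]

private lemma aux_pow_gcd {K : Type*} [Field K] (p : ℕ) (a : K) :
    ∀ m n : ℕ, a ^ (p ^ m) = a → a ^ (p ^ n) = a → a ^ (p ^ Nat.gcd m n) = a := by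
  intro m n
  induction m, n using Nat.gcd.induction with
  | H0 n => intro _ h; simpa using h
  | H1 m n hm ih =>
    intro h1 h2
    rw [Nat.gcd_rec]
    refine ih ?_ h1
    have := aux_pow_mod p a m h1 (n / m) (n % m)
    rw [show n / m * m + n % m = n by rw [mul_comm]; exact Nat.div_add_mod n m, h2] at this
    exact this.symm

private lemma aux_finset_gcd {K : Type*} [Field K] (p : ℕ) (a : K)
    {ι : Type*} (s : Finset ι) (f : ι → ℕ)
    (h : ∀ j ∈ s, a ^ (p ^ (f j)) = a) : a ^ (p ^ (s.gcd f)) = a := by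
  classical
  induction s using Finset.induction_on with
  | empty => simp
  | @insert x s hx ih =>
    rw [Finset.gcd_insert]
    exact aux_pow_gcd p a _ _ (h x (Finset.mem_insert_self x s))
      (ih fun j hj => h j (Finset.mem_insert_of_mem hj))

/-- If `A(aY) = k·A(Y)` as polynomials, where `A(Y) = ∑ coef_j Y^{p^j}` is a
separable additive polynomial with `coef_0, coef_n ≠ 0` over a field of
characteristic `p`, and `a, k` are nonzero, then `k = a` and `a^{p^d - 1} = 1`,
where `d` is the gcd of the indices `j` with `coef_j ≠ 0`. -/
theorem stmt_6 {K : Type*} [Field K] (p : ℕ) (hp : p.Prime) [CharP K p]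
    (n : ℕ) (hn : 1 ≤ n) (coef : Fin (n + 1) → K) (h0 : coef 0 ≠ 0)
    (hlast : coef (Fin.last n) ≠ 0)
    (A : Polynomial K) (hA : A = ∑ j : Fin (n + 1), C (coef j) * X ^ (p ^ (j : ℕ)))
    (d : ℕ) (hd : d = Finset.gcd (Finset.univ.filter fun j => coef j ≠ 0)
      (fun j : Fin (n + 1) => (j : ℕ)))
    (a k : K) (ha : a ≠ 0) (hk : k ≠ 0)
    (heq : A.comp (C a * X) = C k * A) :
    k = a ∧ a ^ (p ^ d - 1) = 1 := by
  have key : ∀ i : Fin (n + 1), coef i * a ^ (p ^ (i : ℕ)) = k * coef i := by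
    intro i
    have h1 : A.comp (C a * X)
        = ∑ j : Fin (n + 1), C (coef j * a ^ (p ^ (j : ℕ))) * X ^ (p ^ (j : ℕ)) := by
      rw [hA, Polynomial.sum_comp]
      refine Finset.sum_congr rfl fun j _ => ?_
      rw [mul_comp, C_comp, pow_comp, X_comp, mul_pow, ← C_pow, C_mul]
      ring
    have h2 : C k * A = ∑ j : Fin (n + 1), C (k * coef j) * X ^ (p ^ (j : ℕ)) := by
      rw [hA, Finset.mul_sum]
      refine Finset.sum_congr rfl fun j _ => ?_
      rw [C_mul]; ring
    have hco := congrArg (fun q : Polynomial K => q.coeff (p ^ (i : ℕ))) heq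
    simp only [h1, h2, Polynomial.finset_sum_coeff, Polynomial.coeff_C_mul,
      Polynomial.coeff_X_pow] at hco
    rw [Finset.sum_eq_single i, Finset.sum_eq_single i] at hco
    · simpa using hco
    · intro b _ hb
      have : p ^ (b : ℕ) ≠ p ^ (i : ℕ) := fun h =>
        hb (Fin.ext (Nat.pow_right_injective hp.two_le h))
      simp [Ne.symm this]
    · simp
    · intro b _ hb
      have : p ^ (b : ℕ) ≠ p ^ (i : ℕ) := fun h =>
        hb (Fin.ext (Nat.pow_right_injective hp.two_le h))
      simp [Ne.symm this]
    · simp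
  have hka : k = a := by
    have := key 0
    simp only [Fin.val_zero, pow_zero, pow_one] at this
    rw [mul_comm (coef 0) a] at this
    exact (mul_right_cancel₀ h0 this).symm
  refine ⟨hka, ?_⟩
  have hfix : ∀ j ∈ Finset.univ.filter fun j : Fin (n + 1) => coef j ≠ 0,
      a ^ (p ^ ((j : Fin (n + 1)) : ℕ)) = a := by
    intro j hj
    have hj' : coef j ≠ 0 := (Finset.mem_filter.mp hj).2
    have := key j
    rw [hka, mul_comm a (coef j)] at this
    exact mul_left_cancel₀ hj' this
  have hpd : a ^ (p ^ d) = a := by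
    rw [hd]; exact aux_finset_gcd p a _ _ hfix
  have hge : 1 ≤ p ^ d := Nat.one_le_pow _ _ hp.pos
  have : a ^ (p ^ d - 1) * a = 1 * a := by
    rw [one_mul, ← pow_succ, Nat.sub_add_cancel hge, hpd]
  exact mul_right_cancel₀ ha this
end

section
/- Let q be a prime power, r ≥ 3, c = (q^r−1)/(q−1), and 1 ≤ ℓ ≤ c − 3. Then the number of pairs (i, j) ∈ ℕ² with 0 ≤ i < q^r, 0 ≤ j < q^{r−1}, and i·q^{r−1} + j·c ≤ ℓ·q^{r−1} equals ℓ + 1 + Σ_{s=0}^{ℓ} ⌊ s·q^{r−1}/c ⌋. -/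
/-- For `q` a prime power, `r ≥ 3`, `c = (q^r-1)/(q-1)` and `1 ≤ ℓ ≤ c - 3`,
the number of pairs `(i, j) ∈ ℕ²` with `i < q^r`, `j < q^{r-1}` and
`i·q^{r-1} + j·c ≤ ℓ·q^{r-1}` equals `ℓ + 1 + ∑_{s=0}^{ℓ} ⌊s·q^{r-1}/c⌋`. -/
theorem stmt_12 (p e : ℕ) (hp : p.Prime) (he : 1 ≤ e) (q : ℕ) (hq : q = p ^ e)
    (r : ℕ) (hr : 3 ≤ r) (c : ℕ) (hc : c = (q ^ r - 1) / (q - 1))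
    (ℓ : ℕ) (hℓ1 : 1 ≤ ℓ) (hℓ2 : ℓ ≤ c - 3) :
    ((Finset.range (q ^ r) ×ˢ Finset.range (q ^ (r - 1))).filter
        (fun ij => ij.1 * q ^ (r - 1) + ij.2 * c ≤ ℓ * q ^ (r - 1))).card
      = ℓ + 1 + ∑ s ∈ Finset.range (ℓ + 1), s * q ^ (r - 1) / c := by
  have hq2 : 2 ≤ q := by
    subst hq
    calc 2 ≤ p := hp.two_le
      _ ≤ p ^ e := Nat.le_self_pow (by omega) p
  set m := q ^ (r - 1) with hm
  have hmpos : 0 < m := pow_pos (by omega) _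
  have hcpos : 0 < c := by omega
  have hℓc : ℓ + 3 ≤ c := by omega
  have hcle : c ≤ q ^ r - 1 := by rw [hc]; exact Nat.div_le_self _ _
  have hqrpos : 0 < q ^ r := pow_pos (by omega) r
  have hℓqr : ℓ < q ^ r := by omega
  have key : ((Finset.range (q ^ r) ×ˢ Finset.range m).filter
      (fun ij => ij.1 * m + ij.2 * c ≤ ℓ * m))
    = (Finset.range (ℓ + 1)).biUnion
        (fun i => (Finset.range ((ℓ - i) * m / c + 1)).image (fun j => (i, j))) := by
    ext ⟨i, j⟩
    simp only [Finset.mem_filter, Finset.mem_product, Finset.mem_range,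
      Finset.mem_biUnion, Finset.mem_image, Prod.mk.injEq]
    constructor
    · rintro ⟨⟨hi, hj⟩, hle⟩
      have hiℓ : i ≤ ℓ := by
        by_contra h
        push_neg at h
        have : ℓ * m < i * m := (Nat.mul_lt_mul_right hmpos).2 h
        omega
      refine ⟨i, by omega, j, ?_, rfl, rfl⟩
      have h1 : (ℓ - i) * m = ℓ * m - i * m := Nat.sub_mul ℓ i m
      have h2 : i * m ≤ ℓ * m := Nat.mul_le_mul_right m hiℓ
      have h3 : j * c ≤ (ℓ - i) * m := by omega
      have := (Nat.le_div_iff_mul_le hcpos).2 h3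
      omega
    · rintro ⟨a, ha, b, hb, rfl, rfl⟩
      have hiℓ : a ≤ ℓ := by omega
      have hjle : b ≤ (ℓ - a) * m / c := by omega
      have h3 : b * c ≤ (ℓ - a) * m := (Nat.le_div_iff_mul_le hcpos).1 hjle
      have h1 : (ℓ - a) * m = ℓ * m - a * m := Nat.sub_mul ℓ a m
      have h2 : a * m ≤ ℓ * m := Nat.mul_le_mul_right m hiℓ
      have hjm : b < m := by
        have hlt : (ℓ - a) * m < m * c := by
          calc (ℓ - a) * m < c * m := (Nat.mul_lt_mul_right hmpos).2 (by omega)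
            _ = m * c := Nat.mul_comm _ _
        exact Nat.lt_of_mul_lt_mul_right (lt_of_le_of_lt h3 hlt)
      exact ⟨⟨by omega, hjm⟩, by omega⟩
  rw [key, Finset.card_biUnion]
  · have hcard : ∀ i ∈ Finset.range (ℓ + 1),
        ((Finset.range ((ℓ - i) * m / c + 1)).image (fun j => (i, j))).card
          = (ℓ - i) * m / c + 1 := by
      intro i _
      rw [Finset.card_image_of_injective _ (fun x y h => by simpa using h),
        Finset.card_range]
    rw [Finset.sum_congr rfl hcard]
    have hrefl := Finset.sum_range_reflect (fun s => s * m / c + 1) (ℓ + 1)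
    simp only [Nat.add_sub_cancel] at hrefl
    rw [hrefl, Finset.sum_add_distrib, Finset.sum_const, Finset.card_range, smul_eq_mul,
      mul_one]
    omega
  · intro x hx y hy hxy
    simp only [Finset.disjoint_left, Finset.mem_image, Finset.mem_range]
    rintro ⟨a, b⟩ ⟨u, hu, h1⟩ ⟨v, hv, h2⟩
    apply hxy
    injection h1 with h1a h1b
    injection h2 with h2a h2b
    omega
end

section
/- Let q be a prime power, r ≥ 3, c = (q^r − 1)/(q − 1). For integers a ≥ 0 and 1 ≤ b ≤ q − 1 with aq + b ≤ c − 3, one has ⌊ (aq + b)·q^{r−1}/c ⌋ = a(q − 1) + b − 1. -/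
/-- For `q` a prime power, `r ≥ 3`, `c = (q^r-1)/(q-1)`, and integers `a ≥ 0`,
`1 ≤ b ≤ q-1` with `aq + b ≤ c - 3`, one has
`⌊(aq + b)·q^{r-1}/c⌋ = a(q-1) + b - 1`. -/
theorem stmt_13 (p e : ℕ) (hp : p.Prime) (he : 1 ≤ e) (q : ℕ) (hq : q = p ^ e)
    (r : ℕ) (hr : 3 ≤ r) (c : ℕ) (hc : c = (q ^ r - 1) / (q - 1))
    (a b : ℕ) (hb1 : 1 ≤ b) (hb2 : b ≤ q - 1) (hab : a * q + b ≤ c - 3) :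
    (a * q + b) * q ^ (r - 1) / c = a * (q - 1) + b - 1 := by
  have hq2 : 2 ≤ q := by
    rw [hq]
    calc 2 ≤ p := hp.two_le
      _ ≤ p ^ e := Nat.le_self_pow (by omega) p
  obtain ⟨s, hqs⟩ : ∃ s, q = s + 1 := ⟨q - 1, by omega⟩
  have hs1 : 1 ≤ s := by omega
  have hsq : q - 1 = s := by omega
  obtain ⟨t, hbt⟩ : ∃ t, b = t + 1 := ⟨b - 1, by omega⟩
  have hts : t + 1 ≤ s := by omega
  have hdvd : s ∣ q ^ r - 1 := by
    have h := Nat.sub_dvd_pow_sub_pow q 1 r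
    simpa [hsq] using h
  have hcs : c * s = q ^ r - 1 := by
    rw [hc, hsq, Nat.div_mul_cancel hdvd]
  have hQq : q ^ (r - 1) * q = q ^ r := by
    rw [← pow_succ]
    congr 1
    omega
  have hqr1 : 1 ≤ q ^ r := Nat.one_le_pow _ _ (by omega)
  have hcs1 : c * s + 1 = q ^ (r - 1) * q := by omega
  have hc3 : a * q + b + 3 ≤ c := by
    have h := hab
    generalize a * q = m at h ⊢
    omega
  have key : (a * q + b) * q ^ (r - 1) * (s * q) = (a * q + b) * s * (c * s + 1) := by
    rw [hcs1]; ring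
  have hgoal : (a * q + b) * q ^ (r - 1) / c = a * s + t := by
    apply Nat.div_eq_of_lt_le
    · apply Nat.le_of_mul_le_mul_right (c := s * q) _ (by positivity)
      rw [key]
      subst hqs hbt
      nlinarith [hts, hc3, sq_nonneg s, Nat.zero_le (c * (s - t))]
    · apply Nat.lt_of_mul_lt_mul_right (a := s * q)
      rw [key]
      subst hqs hbt
      nlinarith [hts, hc3]
  rw [hgoal, hsq, hbt]
  omega
end
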